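/- arXiv:1503.00998 — 2 statements merged into one kernel-verified Lean document; each statement's English description precedes it below -/
import Mathlib

section
/- If G is an r-regular graph on n vertices, 𝓛 a coloring condition over finite color set K, and λ: K → (0,∞), then the total λ-weight of all 𝓛-legal closed neighborhood colorings of G is at most N^λ(r+1,𝓛)^(n/(r+1)), where N^λ(s,𝓛) = Σ_{f:[s]→K, f([s])∈𝓛} ∏ λ(f(i)). -/
/-!
Give the closed neighbourhood `N[v]` the factor
`f_v φ = 1[φ(N[v]) ∈ 𝓛] · (∏_{u ∈ N[v]} λ(φ u))^(1/(r+1))`. Every vertex lies in exactly `r + 1`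
closed neighbourhoods, so `∏_v f_v φ` is the weight of `φ` when `φ` is legal and `0` otherwise.
Finner's inequality bounds `∑_φ ∏_v f_v φ` by `∏_v ‖f_v‖_{r+1}`, and `‖f_v‖_{r+1}^{r+1}` is
`N^λ(r+1, 𝓛)` for every `v`.
-/

open Finset Function
open scoped ENNReal

theorem ENNReal.sum_prod_rpow_le_prod_sum_rpow {ι α : Type*} [Fintype α] (s : Finset ι)
    (F : ι → α → ℝ≥0∞) {w : ι → ℝ} (hw : ∀ i ∈ s, 0 ≤ w i) (hw1 : ∑ i ∈ s, w i = 1) :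
    ∑ x, ∏ i ∈ s, F i x ^ w i ≤ ∏ i ∈ s, (∑ x, F i x) ^ w i := by
  let _ : MeasurableSpace α := ⊤
  simpa [MeasureTheory.lintegral_count, tsum_fintype] using
    ENNReal.lintegral_prod_norm_pow_le (μ := .count) s
      (fun i _ => (measurable_from_top (f := F i)).aemeasurable) hw1 hw

lemma ENNReal.ofReal_sum_filter_prod {α ι : Type*} (s : Finset α) (t : Finset ι) (P : α → Prop)
    [DecidablePred P] {g : α → ι → ℝ} (hg : ∀ x i, 0 ≤ g x i) :
    ENNReal.ofReal (∑ x ∈ s with P x, ∏ i ∈ t, g x i) =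
      ∑ x ∈ s, if P x then ∏ i ∈ t, ENNReal.ofReal (g x i) else 0 := by
  rw [ENNReal.ofReal_sum_of_nonneg fun x _ => prod_nonneg fun i _ => hg x i, sum_filter]
  refine sum_congr rfl fun x _ => ?_
  split_ifs
  · exact ENNReal.ofReal_prod_of_nonneg fun i _ => hg x i
  · rfl

lemma DependsOn.apply_update_of_notMem {V K β : Type*} [DecidableEq V] {F : (V → K) → β}
    {S : Set V} (hF : DependsOn F S) {u : V} (hu : u ∉ S) (φ : V → K) (x : K) :
    F (Function.update φ u x) = F φ :=
  hF fun _ hw => update_of_ne (ne_of_mem_of_not_mem hw hu) _ _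

section sliceLpNorm

variable {ι V K : Type*} [DecidableEq V] [Fintype K]

noncomputable def sliceLpNorm (u : V) (p : ℝ) (F : (V → K) → ℝ≥0∞) (φ : V → K) : ℝ≥0∞ :=
  (∑ x, F (update φ u x) ^ p) ^ p⁻¹

lemma DependsOn.sliceLpNorm {F : (V → K) → ℝ≥0∞} {S : Set V} (hF : DependsOn F S) (u : V)
    (p : ℝ) : DependsOn (sliceLpNorm u p F) S := by
  intro φ φ' h
  refine congrArg (· ^ p⁻¹) (sum_congr rfl fun x _ => congrArg (· ^ p) (hF fun w hw => ?_))
  rcases eq_or_ne w u with rfl | hne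
  · simp
  · simp [hne, h w hw]

lemma sum_prod_update_le_prod_sliceLpNorm {p : ℕ} (hp : p ≠ 0) {T : Finset ι} (hT : #T = p)
    (F : ι → (V → K) → ℝ≥0∞) (φ : V → K) (u : V) :
    ∑ x, ∏ i ∈ T, F i (update φ u x) ≤ ∏ i ∈ T, sliceLpNorm u p (F i) φ := by
  have hp' : (p : ℝ) ≠ 0 := Nat.cast_ne_zero.2 hp
  simpa [sliceLpNorm, ENNReal.pow_rpow_inv_natCast hp] using
    ENNReal.sum_prod_rpow_le_prod_sum_rpow T (fun i x => F i (update φ u x) ^ (p : ℝ))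
      (fun _ _ => inv_nonneg.2 (Nat.cast_nonneg p)) (by simp [hT, hp'])

lemma sum_update_prod_le_prod_ite_sliceLpNorm [Fintype ι] {p : ℕ} (hp : p ≠ 0) {S : ι → Finset V}
    {u : V} (hu : #{i | u ∈ S i} = p) {f : ι → (V → K) → ℝ≥0∞} (hf : ∀ i, DependsOn (f i) (S i))
    (φ : V → K) :
    ∑ x, ∏ i, f i (update φ u x) ≤ ∏ i, (if u ∈ S i then sliceLpNorm u p (f i) else f i) φ := by
  simp only [apply_ite (fun g : (V → K) → ℝ≥0∞ => g φ), prod_ite]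
  have hfix : ∀ x, ∏ i with u ∉ S i, f i (update φ u x) = ∏ i with u ∉ S i, f i φ := fun x =>
    prod_congr rfl fun i hi =>
      (hf i).apply_update_of_notMem (by simpa using (mem_filter.1 hi).2) φ x
  simp_rw [← prod_filter_mul_prod_filter_not univ (fun i => u ∈ S i), hfix, ← sum_mul]
  exact mul_le_mul_left (sum_prod_update_le_prod_sliceLpNorm hp hu f φ u) _

end sliceLpNorm

section agreeOutside

variable {ι V K : Type*} [Fintype V] [DecidableEq V] [Fintype K] [DecidableEq K]

/-- Colorings of `C`, completed by the reference coloring `ψ` outside `C`. -/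
def agreeOutside (C : Finset V) (ψ : V → K) : Finset (V → K) :=
  {φ | ∀ u ∉ C, φ u = ψ u}

@[simp]
lemma mem_agreeOutside {C : Finset V} {ψ φ : V → K} :
    φ ∈ agreeOutside C ψ ↔ ∀ u ∉ C, φ u = ψ u := by
  simp [agreeOutside]

lemma agreeOutside_univ (ψ : V → K) : agreeOutside univ ψ = univ := by
  ext φ; simp

lemma agreeOutside_empty (ψ : V → K) : agreeOutside ∅ ψ = {ψ} := by
  ext φ; simp [funext_iff]

lemma sum_agreeOutside_eq_sum_update {M : Type*} [AddCommMonoid M] {C : Finset V} {u : V}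
    (hu : u ∈ C) (ψ : V → K) (F : (V → K) → M) :
    ∑ φ ∈ agreeOutside C ψ, F φ = ∑ x, ∑ φ ∈ agreeOutside (C.erase u) ψ, F (update φ u x) := by
  rw [← sum_product']
  refine sum_nbij' (fun φ => (φ u, update φ u (ψ u))) (fun q => update q.2 u q.1) ?_ ?_ ?_ ?_ ?_
  · intro φ hφ
    simp only [mem_product, mem_univ, mem_agreeOutside, true_and] at hφ ⊢
    intro w hw
    rcases eq_or_ne w u with rfl | hne
    · simp
    · simpa [hne] using hφ w (by simp_all)
  · rintro ⟨x, φ⟩ hφ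
    simp only [mem_product, mem_univ, mem_agreeOutside, true_and] at hφ ⊢
    intro w hw
    rw [update_of_ne (ne_of_mem_of_not_mem hu hw).symm]
    exact hφ w (by simp_all)
  · intro φ _
    simp
  · rintro ⟨x, φ⟩ hφ
    simp only [mem_product, mem_univ, mem_agreeOutside, true_and] at hφ
    simp [← hφ u (notMem_erase u C)]
  · intro φ _
    simp

lemma sum_agreeOutside_restrict {M : Type*} [AddCommMonoid M] (C : Finset V) (ψ : V → K)
    (F : (C → K) → M) :
    ∑ φ ∈ agreeOutside C ψ, F (fun s => φ s) = ∑ h : C → K, F h := by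
  refine sum_nbij' (fun φ s => φ s) (fun h w => if hw : w ∈ C then h ⟨w, hw⟩ else ψ w)
    ?_ ?_ ?_ ?_ ?_
  all_goals intros; simp_all [funext_iff]

lemma sum_sliceLpNorm_rpow {p : ℝ} (hp : p ≠ 0) {C : Finset V} {u : V} (hu : u ∈ C) (ψ : V → K)
    (F : (V → K) → ℝ≥0∞) :
    ∑ φ ∈ agreeOutside (C.erase u) ψ, sliceLpNorm u p F φ ^ p =
      ∑ φ ∈ agreeOutside C ψ, F φ ^ p := by
  simp [sum_agreeOutside_eq_sum_update hu ψ, sum_comm (s := univ), sliceLpNorm,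
    ← ENNReal.rpow_mul, inv_mul_cancel₀ hp]

/-- Summing out a coordinate `u ∈ A`, Hölder's inequality with exponents `1/p` applied to the `p`
factors that see `u` replaces each of them by its `ℓ^p`-norm along `u`. -/
theorem sum_agreeOutside_prod_le_prod_sum_rpow [Fintype ι] {p : ℕ} (hp : p ≠ 0) {S : ι → Finset V}
    (hS : ∀ u, #{i | u ∈ S i} = p) (ψ : V → K) (A : Finset V) (f : ι → (V → K) → ℝ≥0∞)
    (hf : ∀ i, DependsOn (f i) (S i)) :
    ∑ φ ∈ agreeOutside A ψ, ∏ i, f i φ ≤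
      ∏ i, (∑ φ ∈ agreeOutside (S i ∩ A) ψ, f i φ ^ (p : ℝ)) ^ (p : ℝ)⁻¹ := by
  have hp' : (p : ℝ) ≠ 0 := Nat.cast_ne_zero.2 hp
  induction A using Finset.induction generalizing f with
  | empty => simp [agreeOutside_empty, ENNReal.pow_rpow_inv_natCast hp]
  | insert u A hu ih =>
    set g : ι → (V → K) → ℝ≥0∞ := fun i => if u ∈ S i then sliceLpNorm u p (f i) else f i
    have hg : ∀ i, DependsOn (g i) (S i) := fun i => by
      by_cases h : u ∈ S i <;> simp [g, h, (hf i).sliceLpNorm, hf i]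
    have hgp : ∀ i, ∑ φ ∈ agreeOutside (S i ∩ A) ψ, g i φ ^ (p : ℝ) =
        ∑ φ ∈ agreeOutside (S i ∩ insert u A) ψ, f i φ ^ (p : ℝ) := fun i => by
      by_cases h : u ∈ S i
      · rw [inter_insert_of_mem h, ← sum_sliceLpNorm_rpow hp' (mem_insert_self _ _),
          erase_insert fun h' => hu (mem_inter.1 h').2]
        simp [g, h]
      · simp [g, h, inter_insert_of_notMem h]
    calc ∑ φ ∈ agreeOutside (insert u A) ψ, ∏ i, f i φ
        = ∑ φ ∈ agreeOutside A ψ, ∑ x, ∏ i, f i (update φ u x) := by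
          rw [sum_agreeOutside_eq_sum_update (mem_insert_self u A), erase_insert hu, sum_comm]
      _ ≤ ∑ φ ∈ agreeOutside A ψ, ∏ i, g i φ :=
          sum_le_sum fun φ _ => sum_update_prod_le_prod_ite_sliceLpNorm hp (hS u) hf φ
      _ ≤ ∏ i, (∑ φ ∈ agreeOutside (S i ∩ A) ψ, g i φ ^ (p : ℝ)) ^ (p : ℝ)⁻¹ := ih g hg
      _ = _ := by simp_rw [hgp]

/-- Finner's inequality. -/
theorem sum_prod_restrict_le_prod_sum_rpow [Fintype ι] {p : ℕ} (hp : p ≠ 0) {S : ι → Finset V}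
    (hS : ∀ u, #{i | u ∈ S i} = p) (F : ∀ i, (S i → K) → ℝ≥0∞) :
    ∑ φ : V → K, ∏ i, F i (fun s => φ s) ≤ ∏ i, (∑ h, F i h ^ (p : ℝ)) ^ (p : ℝ)⁻¹ := by
  rcases isEmpty_or_nonempty (V → K) with hVK | ⟨⟨ψ⟩⟩
  · simp
  have hF : ∀ i, DependsOn (fun φ : V → K => F i (fun s => φ s)) (S i) := fun i φ φ' h => by
    simp only [funext_iff.2 fun s : S i => h s s.2]
  have := sum_agreeOutside_prod_le_prod_sum_rpow hp hS ψ univ _ hF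
  simp only [agreeOutside_univ, inter_univ] at this
  simpa only [sum_agreeOutside_restrict (S _) ψ fun h => F _ h ^ (p : ℝ)] using this

end agreeOutside

section legalWeight

variable {K : Type*} [DecidableEq K] (𝓛 : Finset (Multiset K)) (L : K → ℝ≥0∞)

/-- Summed over `h : Fin s → K`, this is the paper's `N^λ(s, 𝓛)` with weights `L = λ`. -/
noncomputable def legalWeight {α : Type*} [Fintype α] (h : α → K) : ℝ≥0∞ :=
  if univ.val.map h ∈ 𝓛 then ∏ a, L (h a) else 0

lemma legalWeight_restrict {V : Type*} (S : Finset V) (φ : V → K) :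
    legalWeight 𝓛 L (fun s : S => φ s) = if S.val.map φ ∈ 𝓛 then ∏ u ∈ S, L (φ u) else 0 := by
  have hmap : Multiset.map (fun s : S => φ s) univ.val = S.val.map φ := by
    rw [univ_eq_attach, attach_val]
    exact Multiset.attach_map_val' _ _
  rw [legalWeight, prod_coe_sort S (fun u => L (φ u)), hmap]

lemma legalWeight_comp_equiv {α β : Type*} [Fintype α] [Fintype β] (e : α ≃ β) (h : β → K) :
    legalWeight 𝓛 L (h ∘ e) = legalWeight 𝓛 L h := by
  rw [legalWeight, legalWeight, ← Multiset.map_map, Multiset.map_univ_val_equiv]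
  simp only [comp_apply, Equiv.prod_comp e (fun b => L (h b))]

lemma sum_legalWeight_equiv {α β : Type*} [Fintype α] [DecidableEq α] [Fintype β] [DecidableEq β]
    [Fintype K] (e : α ≃ β) :
    ∑ h : α → K, legalWeight 𝓛 L h = ∑ h : β → K, legalWeight 𝓛 L h :=
  Fintype.sum_equiv (e.arrowCongr (Equiv.refl K)) _ _ fun h =>
    (legalWeight_comp_equiv 𝓛 L e.symm h).symm

end legalWeight

namespace SimpleGraph

variable {V : Type*} [Fintype V] [DecidableEq V] (G : SimpleGraph V) [DecidableRel G.Adj]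

def closedNeighborFinset (v : V) : Finset V := insert v (G.neighborFinset v)

variable {G}

lemma mem_closedNeighborFinset {u v : V} : u ∈ G.closedNeighborFinset v ↔ u = v ∨ G.Adj v u := by
  simp [closedNeighborFinset]

lemma mem_closedNeighborFinset_comm {u v : V} :
    u ∈ G.closedNeighborFinset v ↔ v ∈ G.closedNeighborFinset u := by
  simp only [mem_closedNeighborFinset, eq_comm (a := u), G.adj_comm v u]

lemma closedNeighborFinset_val (v : V) :
    (G.closedNeighborFinset v).val = v ::ₘ (G.neighborFinset v).val :=
  insert_val_of_notMem (by simp)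

lemma IsRegularOfDegree.card_closedNeighborFinset {r : ℕ} (hreg : G.IsRegularOfDegree r) (v : V) :
    #(G.closedNeighborFinset v) = r + 1 := by
  rw [closedNeighborFinset, card_insert_of_notMem (by simp), card_neighborFinset_eq_degree, hreg v]

lemma IsRegularOfDegree.card_filter_mem_closedNeighborFinset {r : ℕ}
    (hreg : G.IsRegularOfDegree r) (u : V) : #{v | u ∈ G.closedNeighborFinset v} = r + 1 := by
  simp_rw [mem_closedNeighborFinset_comm (u := u), filter_mem_eq_inter, univ_inter,
    hreg.card_closedNeighborFinset]

lemma IsRegularOfDegree.prod_prod_closedNeighborFinset {M : Type*} [CommMonoid M] {r : ℕ}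
    (hreg : G.IsRegularOfDegree r) (a : V → M) :
    ∏ v, ∏ u ∈ G.closedNeighborFinset v, a u = ∏ u, a u ^ (r + 1) := by
  rw [prod_comm' (t' := univ) (s' := G.closedNeighborFinset)
    (by simp [mem_closedNeighborFinset_comm])]
  simp [hreg.card_closedNeighborFinset]

theorem IsRegularOfDegree.prod_legalWeight_closedNeighborFinset {K : Type*} [DecidableEq K]
    {r : ℕ} (hreg : G.IsRegularOfDegree r) (𝓛 : Finset (Multiset K)) (L : K → ℝ≥0∞) (φ : V → K) :
    ∏ v, legalWeight 𝓛 L (fun s : G.closedNeighborFinset v => φ s) =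
      if ∀ v, φ v ::ₘ (G.neighborFinset v).val.map φ ∈ 𝓛 then (∏ v, L (φ v)) ^ (r + 1) else 0 := by
  simp only [legalWeight_restrict, Fintype.prod_ite_zero, closedNeighborFinset_val,
    Multiset.map_cons, hreg.prod_prod_closedNeighborFinset, prod_pow]

theorem IsRegularOfDegree.sum_closedNeighborColoring_weight_le {K : Type*} [Fintype K]
    [DecidableEq K] {r : ℕ} (hreg : G.IsRegularOfDegree r) (𝓛 : Finset (Multiset K))
    (L : K → ℝ≥0∞) :
    ∑ φ : V → K, (if ∀ v, φ v ::ₘ (G.neighborFinset v).val.map φ ∈ 𝓛 then ∏ v, L (φ v) else 0) ≤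
      (∑ h : Fin (r + 1) → K, legalWeight 𝓛 L h) ^ ((Fintype.card V : ℝ) / (r + 1)) := by
  have hFinner := sum_prod_restrict_le_prod_sum_rpow r.add_one_ne_zero
    hreg.card_filter_mem_closedNeighborFinset fun v h => legalWeight 𝓛 L h ^ ((r + 1 : ℕ) : ℝ)⁻¹
  have hlocal : ∀ v, ∑ h : G.closedNeighborFinset v → K, legalWeight 𝓛 L h =
      ∑ h : Fin (r + 1) → K, legalWeight 𝓛 L h := fun v =>
    sum_legalWeight_equiv 𝓛 L (equivFinOfCardEq (hreg.card_closedNeighborFinset v))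
  simp only [ENNReal.prod_rpow_of_nonneg (inv_nonneg.2 (Nat.cast_nonneg _)),
    hreg.prod_legalWeight_closedNeighborFinset,
    ENNReal.rpow_inv_rpow (Nat.cast_ne_zero.2 r.add_one_ne_zero), hlocal, prod_const,
    card_univ] at hFinner
  calc _ = ∑ φ : V → K, (if ∀ v, φ v ::ₘ (G.neighborFinset v).val.map φ ∈ 𝓛
          then (∏ v, L (φ v)) ^ (r + 1) else 0) ^ ((r + 1 : ℕ) : ℝ)⁻¹ := by
        refine sum_congr rfl fun φ _ => ?_
        split_ifs
        · exact (ENNReal.pow_rpow_inv_natCast r.add_one_ne_zero _).symm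
        · exact (ENNReal.zero_rpow_of_pos (by positivity)).symm
    _ ≤ _ := hFinner
    _ = _ := by
        rw [← ENNReal.rpow_natCast, ← ENNReal.rpow_mul, div_eq_mul_inv, Nat.cast_add_one]

end SimpleGraph

/-- Weighted version: the total weight of all `𝓛`-legal closed neighborhood colorings of
an `r`-regular graph `G` on `n` vertices is at most `N^λ(r+1,𝓛)^(n/(r+1))`. -/
theorem stmt5 {V K : Type*} [Fintype V] [DecidableEq V] [Fintype K] [DecidableEq K] (G : SimpleGraph V)
    [DecidableRel G.Adj] (r : ℕ) (hreg : G.IsRegularOfDegree r)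
    (𝓛 : Finset (Multiset K)) (lam : K → ℝ) (hlam : ∀ x, 0 < lam x) :
    (∑ φ ∈ Finset.univ.filter
        (fun φ : V → K => ∀ v : V, φ v ::ₘ (G.neighborFinset v).val.map φ ∈ 𝓛),
        ∏ v : V, lam (φ v)) ≤
      (∑ f ∈ Finset.univ.filter (fun f : Fin (r + 1) → K => Finset.univ.val.map f ∈ 𝓛),
        ∏ i : Fin (r + 1), lam (f i)) ^ ((Fintype.card V : ℝ) / (r + 1)) := by
  have hB : 0 ≤ ∑ f ∈ Finset.univ.filter (fun f : Fin (r + 1) → K => Finset.univ.val.map f ∈ 𝓛),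
      ∏ i : Fin (r + 1), lam (f i) :=
    sum_nonneg fun _ _ => prod_nonneg fun _ _ => (hlam _).le
  rw [← ENNReal.ofReal_le_ofReal_iff (Real.rpow_nonneg hB _), ← ENNReal.ofReal_rpow_of_nonneg hB
      (by positivity), ENNReal.ofReal_sum_filter_prod _ _ _ fun _ _ => (hlam _).le,
    ENNReal.ofReal_sum_filter_prod _ _ _ fun _ _ => (hlam _).le]
  exact hreg.sum_closedNeighborColoring_weight_le 𝓛 fun k => ENNReal.ofReal (lam k)
end

section
/- If G is an r-regular graph on n vertices and q ≥ 1 an integer, then the number of proper q-colorings of the closed neighborhood hypergraph 𝓝_c(G) is at most (q^(r+1) - q)^(n/(r+1)). -/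
/-
Shearer's lemma: if every vertex lies in at least `k` of the sets `A i`, then a family `F` of maps
`V → X` satisfies `|F|^k ≤ ∏ i |F_{A i}|`, where `F_A` is the set of restrictions to `A`.
For an `r`-regular graph every vertex lies in exactly `r + 1` closed neighbourhoods, and a proper
colouring restricts to a non-constant map on each `N[v]`, of which there are `q^(r+1) - q`.
Hence `|F|^(r+1) ≤ (q^(r+1) - q)^n`.
-/
open Finset
open scoped ENNReal

theorem ENNReal.sum_prod_rpow_le_prod_sum_rpow_s9 {ι κ : Type*} (s : Finset ι) (t : Finset κ)
    (f : ι → κ → ℝ≥0∞) {p : ι → ℝ} (hp : ∑ i ∈ s, p i = 1) (hp₀ : ∀ i ∈ s, 0 ≤ p i) :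
    ∑ c ∈ t, ∏ i ∈ s, f i c ^ p i ≤ ∏ i ∈ s, (∑ c ∈ t, f i c) ^ p i := by
  let _ : MeasurableSpace κ := ⊤
  have hsum (g : κ → ℝ≥0∞) : ∫⁻ c in (t : Set κ), g c ∂.count = ∑ c ∈ t, g c := by
    simp [MeasureTheory.lintegral_finset]
  simpa only [hsum] using ENNReal.lintegral_prod_norm_pow_le
    (μ := MeasureTheory.Measure.count.restrict t) s
    (fun i _ => (measurable_from_top (f := f i)).aemeasurable) hp hp₀

/-- The inductive step of Shearer's lemma: `a c` counts the members of the family with value `c`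
at the new coordinate, `b i c` their traces on `A i`, and `S` indexes `k` sets containing the new
coordinate. -/
theorem ENNReal.sum_pow_le_prod_of_pow_le_prod {ι κ : Type*} [Fintype ι] [DecidableEq ι] {k : ℕ}
    (hk : k ≠ 0) (S : Finset ι) (hS : #S = k) (t : Finset κ) (a : κ → ℝ≥0∞) (b : ι → κ → ℝ≥0∞)
    (B : ι → ℝ≥0∞) (ha : ∀ c ∈ t, a c ^ k ≤ ∏ i, b i c) (hb : ∀ i ∉ S, ∀ c ∈ t, b i c ≤ B i)
    (hbS : ∀ i ∈ S, ∑ c ∈ t, b i c ≤ B i) :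
    (∑ c ∈ t, a c) ^ k ≤ ∏ i, B i := by
  set e : ℝ := (k : ℝ)⁻¹
  have he : 0 ≤ e := by positivity
  have ha' (c) (hc : c ∈ t) : a c ≤ ∏ i, b i c ^ e := by
    rw [ENNReal.prod_rpow_of_nonneg he, ← ENNReal.pow_rpow_inv_natCast hk (a c)]
    exact ENNReal.rpow_le_rpow (ha c hc) he
  have hholder : ∑ c ∈ t, ∏ i ∈ S, b i c ^ e ≤ ∏ i ∈ S, (∑ c ∈ t, b i c) ^ e :=
    ENNReal.sum_prod_rpow_le_prod_sum_rpow_s9 S t b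
      (by rw [sum_const, hS, nsmul_eq_mul, mul_inv_cancel₀ (by exact_mod_cast hk)])
      (fun _ _ => he)
  calc (∑ c ∈ t, a c) ^ k
      ≤ (∑ c ∈ t, (∏ i ∈ S, b i c ^ e) * ∏ i ∈ Sᶜ, b i c ^ e) ^ k := by
        simp only [prod_mul_prod_compl]
        gcongr with c hc
        exact ha' c hc
    _ ≤ ((∑ c ∈ t, ∏ i ∈ S, b i c ^ e) * ∏ i ∈ Sᶜ, B i ^ e) ^ k := by
        rw [sum_mul]
        gcongr with c hc i hi
        exact hb i (mem_compl.mp hi) c hc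
    _ ≤ ((∏ i ∈ S, B i ^ e) * ∏ i ∈ Sᶜ, B i ^ e) ^ k := by
        gcongr
        refine hholder.trans (prod_le_prod' fun i hi => ?_)
        gcongr
        exact hbS i hi
    _ = ∏ i, B i := by
        rw [prod_mul_prod_compl, ← prod_pow]
        exact prod_congr rfl fun i _ => ENNReal.rpow_inv_natCast_pow hk (B i)

section Shearer

variable {ι V X : Type*} [Fintype ι] [DecidableEq X]

def projOn (A : Finset V) (F : Finset (V → X)) : Finset (A → X) :=
  F.image fun φ a => φ a

theorem projOn_mono (A : Finset V) {F F' : Finset (V → X)} (h : F ⊆ F') :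
    projOn A F ⊆ projOn A F' :=
  image_subset_image h

theorem projOn_filter_apply_eq {A : Finset V} {x : V} (hx : x ∈ A) (F : Finset (V → X))
    (c : X) : projOn A {φ ∈ F | φ x = c} = {ψ ∈ projOn A F | ψ ⟨x, hx⟩ = c} := by
  simp only [projOn, filter_image]

theorem card_projOn_eq_sum {A : Finset V} {x : V} (hx : x ∈ A) (F : Finset (V → X)) :
    #(projOn A F) = ∑ c ∈ F.image (· x), #(projOn A {φ ∈ F | φ x = c}) := by
  simp only [projOn_filter_apply_eq hx]
  refine card_eq_sum_card_fiberwise fun ψ hψ => ?_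
  obtain ⟨φ, hφ, rfl⟩ := mem_image.mp hψ
  exact mem_image_of_mem _ hφ

/-- Shearer's lemma, proved by induction on the set `U` of coordinates on which the members
of `F` may differ. -/
theorem card_pow_le_prod_card_projOn_of_eqOn [DecidableEq V] {k : ℕ} (hk : k ≠ 0)
    (A : ι → Finset V) (U : Finset V) (hU : ∀ x ∈ U, k ≤ #{i | x ∈ A i}) (F : Finset (V → X))
    (hF : ∀ φ ∈ F, ∀ ψ ∈ F, ∀ x ∉ U, φ x = ψ x) :
    #F ^ k ≤ ∏ i, #(projOn (A i) F) := by
  classical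
  induction U using Finset.induction_on generalizing F with
  | empty =>
    have hF1 : #F ≤ 1 := card_le_one.mpr fun φ hφ ψ hψ =>
      funext fun x => hF φ hφ ψ hψ x (notMem_empty x)
    refine (pow_le_of_le_one (Nat.zero_le _) hF1 hk).trans ?_
    rcases F.eq_empty_or_nonempty with rfl | hne
    · exact Nat.zero_le _
    · exact hF1.trans <| Nat.one_le_iff_ne_zero.mpr <| prod_ne_zero_iff.mpr fun i _ =>
        (hne.image _).card_pos.ne'
  | insert x U hxU ih =>
    obtain ⟨S, hSx, hS⟩ := exists_subset_card_eq (hU x (mem_insert_self x U))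
    have hxS : ∀ i ∈ S, x ∈ A i := fun i hi => (mem_filter.mp (hSx hi)).2
    have hfiber (c : X) : #{φ ∈ F | φ x = c} ^ k ≤ ∏ i, #(projOn (A i) {φ ∈ F | φ x = c}) := by
      refine ih (fun y hy => hU y (mem_insert_of_mem hy)) _ fun φ hφ ψ hψ y hy => ?_
      rw [mem_filter] at hφ hψ
      by_cases hyx : y = x
      · rw [hyx, hφ.2, hψ.2]
      · exact hF φ hφ.1 ψ hψ.1 y (by simp [hyx, hy])
    rw [card_eq_sum_card_image (· x) F]
    exact_mod_cast ENNReal.sum_pow_le_prod_of_pow_le_prod hk S hS (F.image (· x))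
      (fun c => #{φ ∈ F | φ x = c}) (fun i c => #(projOn (A i) {φ ∈ F | φ x = c}))
      (fun i => #(projOn (A i) F))
      (fun c _ => by exact_mod_cast hfiber c)
      (fun i _ c _ => by exact_mod_cast card_le_card (projOn_mono _ (filter_subset _ _)))
      (fun i hi => by exact_mod_cast (card_projOn_eq_sum (hxS i hi) F).ge)

theorem card_pow_le_prod_card_projOn [Fintype V] [DecidableEq V] {k : ℕ} (hk : k ≠ 0)
    (A : ι → Finset V) (hA : ∀ x, k ≤ #{i | x ∈ A i}) (F : Finset (V → X)) :
    #F ^ k ≤ ∏ i, #(projOn (A i) F) :=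
  card_pow_le_prod_card_projOn_of_eqOn hk A univ (fun x _ => hA x) F
    fun _ _ _ _ x hx => absurd (mem_univ x) hx

theorem projOn_subset_compl_image_const [DecidableEq V] [Fintype X] {A : Finset V}
    {F : Finset (V → X)} (hF : ∀ φ ∈ F, ∃ u ∈ A, ∃ w ∈ A, φ u ≠ φ w) :
    projOn A F ⊆ (univ.image (Function.const A))ᶜ := by
  intro ψ hψ
  rw [mem_compl]
  intro hconst
  obtain ⟨φ, hφ, rfl⟩ := mem_image.mp hψ
  obtain ⟨c, -, hc⟩ := mem_image.mp hconst
  obtain ⟨u, hu, w, hw, huw⟩ := hF φ hφ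
  exact huw ((congrFun hc ⟨u, hu⟩).symm.trans (congrFun hc ⟨w, hw⟩))

end Shearer

theorem card_compl_image_const (α β : Type*) [Fintype α] [Nonempty α] [Fintype β]
    [DecidableEq α] [DecidableEq β] :
    #(univ.image (Function.const α) : Finset (α → β))ᶜ =
      Fintype.card β ^ Fintype.card α - Fintype.card β := by
  rw [card_compl, card_image_of_injective _ Function.const_injective, Fintype.card_fun, card_univ]

theorem Real.le_rpow_div_of_pow_le_pow {a b : ℝ} (ha : 0 ≤ a) (hb : 0 ≤ b) {k n : ℕ} (hk : k ≠ 0)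
    (h : a ^ k ≤ b ^ n) : a ≤ b ^ ((n : ℝ) / k) := by
  rw [div_eq_mul_inv, Real.rpow_mul hb, Real.rpow_natCast,
    Real.le_rpow_inv_iff_of_pos ha (by positivity) (by positivity), Real.rpow_natCast]
  exact h

namespace SimpleGraph

variable {V : Type*} [Fintype V] [DecidableEq V] (G : SimpleGraph V) [DecidableRel G.Adj]

theorem filter_mem_insert_neighborFinset (x : V) :
    ({v | x ∈ insert v (G.neighborFinset v)} : Finset V) = insert x (G.neighborFinset x) := by
  ext v
  simp [eq_comm, G.adj_comm]

theorem card_insert_neighborFinset {r : ℕ} (hreg : G.IsRegularOfDegree r) (v : V) :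
    #(insert v (G.neighborFinset v)) = r + 1 := by
  rw [card_insert_of_notMem (by simp), card_neighborFinset_eq_degree, hreg v]

end SimpleGraph

theorem stmt9_general {V : Type*} [Fintype V] [DecidableEq V] (G : SimpleGraph V) [DecidableRel G.Adj]
    (r : ℕ) (hreg : G.IsRegularOfDegree r) (q : ℕ) :
    ({φ : V → Fin q | ∀ v : V, ∃ u ∈ insert v (G.neighborFinset v),
        ∃ w ∈ insert v (G.neighborFinset v), φ u ≠ φ w}.ncard : ℝ) ≤
      ((q : ℝ) ^ (r + 1) - q) ^ ((Fintype.card V : ℝ) / (r + 1)) := by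
  set N : V → Finset V := fun v => insert v (G.neighborFinset v)
  set F : Finset (V → Fin q) := {φ | ∀ v, ∃ u ∈ N v, ∃ w ∈ N v, φ u ≠ φ w}
  have hF : {φ : V → Fin q | ∀ v, ∃ u ∈ N v, ∃ w ∈ N v, φ u ≠ φ w}.ncard = #F := by
    rw [← Set.ncard_coe_finset]; simp [F]
  have htrace (v : V) : #(projOn (N v) F) ≤ q ^ (r + 1) - q := by
    have : Nonempty (N v) := ⟨⟨v, mem_insert_self _ _⟩⟩
    calc #(projOn (N v) F)
        ≤ #(univ.image (Function.const (N v)))ᶜ :=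
          card_le_card <| projOn_subset_compl_image_const (F := F) fun φ hφ =>
            (mem_filter.mp hφ).2 v
      _ = q ^ (r + 1) - q := by
          rw [card_compl_image_const, Fintype.card_fin, Fintype.card_coe,
            G.card_insert_neighborFinset hreg]
  have hcover (x : V) : r + 1 ≤ #{v | x ∈ N v} :=
    (G.card_insert_neighborFinset hreg x).ge.trans_eq
      (congrArg card (G.filter_mem_insert_neighborFinset x)).symm
  have hcount : #F ^ (r + 1) ≤ (q ^ (r + 1) - q) ^ Fintype.card V :=
    (card_pow_le_prod_card_projOn r.add_one_ne_zero N hcover F).trans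
      (prod_le_pow_card _ _ _ fun v _ => htrace v)
  have hreal := Real.le_rpow_div_of_pow_le_pow (Nat.cast_nonneg #F)
    (Nat.cast_nonneg (q ^ (r + 1) - q)) r.add_one_ne_zero (by exact_mod_cast hcount)
  rw [hF]
  push_cast [Nat.cast_sub (Nat.le_self_pow r.add_one_ne_zero q)] at hreal
  exact hreal

/-- For an `r`-regular graph `G` on `n` vertices and `q ≥ 1`, the number of proper
`q`-colorings of the closed neighborhood hypergraph of `G` is at most
`(q^(r+1) - q)^(n/(r+1))`. -/
theorem stmt9 {V : Type*} [Fintype V] [DecidableEq V] (G : SimpleGraph V) [DecidableRel G.Adj]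
    (r : ℕ) (hreg : G.IsRegularOfDegree r) (q : ℕ) (hq : 1 ≤ q) :
    ({φ : V → Fin q | ∀ v : V, ∃ u ∈ insert v (G.neighborFinset v),
        ∃ w ∈ insert v (G.neighborFinset v), φ u ≠ φ w}.ncard : ℝ) ≤
      ((q : ℝ) ^ (r + 1) - q) ^ ((Fintype.card V : ℝ) / (r + 1)) :=
  stmt9_general G r hreg q
end
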